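/- The operator L ↦ ⟦L↾⟧ on global languages is a closure operator: it is monotone (L ⊆ L' implies ⟦L↾⟧ ⊆ ⟦L'↾⟧), extensive (L ⊆ ⟦L↾⟧), and idempotent (⟦L↾⟧ = ⟦(⟦L↾⟧)↾⟧). -/

import Mathlib

open scoped Classical

/-- Interactions `A→B:m` over participants and messages drawn from `ℕ`. -/
structure Interaction where
  snd : ℕ
  rcv : ℕ
  msg : ℕ
  ne : snd ≠ rcv

/-- Communication actions: outputs `AB!m` and inputs `AB?m`. -/
inductive Act where
  | out : ℕ → ℕ → ℕ → Act
  | inp : ℕ → ℕ → ℕ → Act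
deriving DecidableEq

/-- Finite or infinite words over `σ`. -/
inductive Word (σ : Type) : Type where
  | fin : List σ → Word σ
  | inf : (ℕ → σ) → Word σ

namespace Word

def get? {σ : Type} : Word σ → ℕ → Option σ
  | fin l, i => l[i]?
  | inf f, i => some (f i)

/-- Prefix relation on possibly infinite words. -/
def Pref {σ : Type} : Word σ → Word σ → Prop
  | fin l, fin l' => l <+: l'
  | fin l, inf g => ∀ i, i < l.length → l[i]? = some (g i)
  | inf f, inf g => f = g
  | inf _, fin _ => False

/-- Concatenation; if the first word is infinite the result is the first word. -/
def cat {σ : Type} : Word σ → Word σ → Word σ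
  | fin l, fin l' => fin (l ++ l')
  | fin l, inf g => inf (fun i => if h : i < l.length then l.get ⟨i, h⟩ else g (i - l.length))
  | inf f, _ => inf f

def Finite {σ : Type} : Word σ → Prop
  | fin _ => True
  | inf _ => False

end Word

/-- Prefix closure of a language. -/
def prefCl {σ : Type} (L : Set (Word σ)) : Set (Word σ) :=
  {z | ∃ z' ∈ L, Word.Pref z z'}

def PrefixClosed {σ : Type} (L : Set (Word σ)) : Prop := L = prefCl L

def iptp (a : Interaction) : Set ℕ := {a.snd, a.rcv}

def asubj : Act → ℕ
  | .out A _ _ => A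
  | .inp _ B _ => B

def aptp : Act → Set ℕ
  | .out A B _ => {A, B}
  | .inp A B _ => {A, B}

/-- Participants of a word of interactions. -/
def wptp (w : Word Interaction) : Set ℕ :=
  {X | ∃ i a, w.get? i = some a ∧ X ∈ iptp a}

/-- Participants of a language of interactions. -/
def lptp (L : Set (Word Interaction)) : Set ℕ :=
  {X | ∃ w ∈ L, X ∈ wptp w}

/-- Global language: prefix-closed with finitely many participants. -/
def IsGLang (L : Set (Word Interaction)) : Prop :=
  PrefixClosed L ∧ (lptp L).Finite

/-- Projection of an interaction on a participant. -/
def projI (X : ℕ) (a : Interaction) : Option Act :=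
  if X = a.snd then some (.out a.snd a.rcv a.msg)
  else if X = a.rcv then some (.inp a.snd a.rcv a.msg)
  else none

def projL (X : ℕ) (l : List Interaction) : List Act := l.filterMap (projI X)

/-- Projection of a (possibly infinite) word of interactions on a participant. -/
noncomputable def proj (X : ℕ) : Word Interaction → Word Act
  | .fin l => .fin (projL X l)
  | .inf f =>
    if {i | (projI X (f i)).isSome = true}.Infinite then
      .inf (fun n =>
        (projI X (f (Nat.nth (fun i => (projI X (f i)).isSome = true) n))).getD (.out 0 0 0))
    else
      .fin (projL X ((List.range (sSup {i | (projI X (f i)).isSome = true} + 1)).map f))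

/-- A communicating system: a set of participants with a local language for each. -/
structure CSystem where
  P : Set ℕ
  lang : ℕ → Set (Word Act)

/-- Well-formedness of a communicating system: finitely many participants, each
assigned a prefix-closed `X`-local language over the participants of the system,
different from `{ε}`. -/
def IsSystem (S : CSystem) : Prop :=
  S.P.Finite ∧ ∀ X ∈ S.P,
    PrefixClosed (S.lang X) ∧
    (∀ w ∈ S.lang X, ∀ i a, Word.get? w i = some a → asubj a = X ∧ aptp a ⊆ S.P) ∧
    S.lang X ≠ {Word.fin []}

/-- Synchronous semantics of a communicating system. -/
def sem (S : CSystem) : Set (Word Interaction) :=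
  {w | wptp w ⊆ S.P ∧ ∀ X ∈ S.P, proj X w ∈ S.lang X}

/-- Projection of a global language on a participant. -/
def projLang (X : ℕ) (L : Set (Word Interaction)) : Set (Word Act) := proj X '' L

/-- The communicating system projected from a global language. -/
noncomputable def projSys (L : Set (Word Interaction)) : CSystem :=
  ⟨lptp L, fun X => projLang X L⟩

/-- Synchronous semantics of the projected system, `⟦L↾⟧`. -/
noncomputable def gsem (L : Set (Word Interaction)) : Set (Word Interaction) :=
  sem (projSys L)

/-- Closure under unknown information. -/
def CUI (L : Set (Word Interaction)) : Prop :=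
  ∀ (w1 w2 : List Interaction) (a : Interaction) (w : Word Interaction),
    Word.fin (w1 ++ [a]) ∈ L → Word.fin (w2 ++ [a]) ∈ L → w ∈ L →
    proj a.snd w = proj a.snd (Word.fin w1) →
    proj a.rcv w = proj a.rcv (Word.fin w2) →
    w.cat (Word.fin [a]) ∈ L

/-- Continuity: an infinite word belongs to `L` whenever infinitely many of its
finite prefixes do. -/
def WContinuous {σ : Type} (L : Set (Word σ)) : Prop :=
  ∀ g : ℕ → σ,
    {l : List σ | Word.fin l ∈ L ∧ Word.Pref (Word.fin l) (Word.inf g)}.Infinite →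
    Word.inf g ∈ L

/-- Standard-or-continuous language. -/
def SC (L : Set (Word Interaction)) : Prop :=
  (∀ w ∈ L, w.Finite) ∨ WContinuous L

/-- Maximal word in a language. -/
def MaximalIn {σ : Type} (L : Set (Word σ)) (w : Word σ) : Prop :=
  w ∈ L ∧ ∀ w' ∈ L, Word.Pref w w' → w' = w

/-- Participant `X` distinguishes two words. -/
def Distinguishes (X : ℕ) (w1 w2 : Word Interaction) : Prop :=
  proj X w1 ≠ proj X w2 ∧
  ¬ (Word.Pref (proj X w1) (proj X w2) ∧ proj X w1 ≠ proj X w2) ∧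
  ¬ (Word.Pref (proj X w2) (proj X w1) ∧ proj X w2 ≠ proj X w1)

/-- Branch-awareness of a global language. -/
def BranchAware (L : Set (Word Interaction)) : Prop :=
  ∀ X ∈ lptp L, ∀ w1 w2, MaximalIn L w1 → MaximalIn L w2 →
    proj X w1 ≠ proj X w2 → Distinguishes X w1 w2

/-- Swapping two adjacent independent interactions. -/
inductive SwapStep : List Interaction → List Interaction → Prop
  | mk (u v : List Interaction) (a b : Interaction) (h : iptp a ∩ iptp b = ∅) :
      SwapStep (u ++ a :: b :: v) (u ++ b :: a :: v)

/-- Mazurkiewicz trace equivalence on finite words. -/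
def TraceEqL : List Interaction → List Interaction → Prop :=
  Relation.ReflTransGen SwapStep

/-- `w ≪ w'` à la Gastin. -/
def wll (w w' : Word Interaction) : Prop :=
  ∀ l : List Interaction, Word.Pref (Word.fin l) w →
    ∃ l' h : List Interaction, Word.Pref (Word.fin l') w' ∧ TraceEqL (l ++ h) l'

/-- Trace equivalence on possibly infinite words. -/
def TraceEq : Word Interaction → Word Interaction → Prop
  | .fin l, .fin l' => TraceEqL l l'
  | w, w' => wll w w' ∧ wll w' w

/-- Finite-state automata with states `Fin n`, all states accepting. -/
structure FSA (σ : Type) where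
  n : ℕ
  q0 : Fin n
  tr : Fin n → σ → Fin n → Prop

inductive FinRun {σ : Type} (A : FSA σ) : Fin A.n → List σ → Fin A.n → Prop
  | nil (q : Fin A.n) : FinRun A q [] q
  | cons {q q' q'' : Fin A.n} {a : σ} {l : List σ} :
      A.tr q a q' → FinRun A q' l q'' → FinRun A q (a :: l) q''

/-- The language of an FSA with all states accepting: finite words labelling runs
from the initial state, together with infinite words labelling infinite runs
(Büchi acceptance with all states accepting). -/
def LangSet {σ : Type} (A : FSA σ) : Set (Word σ) :=
  {w | match w with
       | .fin l => ∃ q, FinRun A A.q0 l q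
       | .inf f => ∃ qs : ℕ → Fin A.n, qs 0 = A.q0 ∧ ∀ i, A.tr (qs i) (f i) (qs (i+1))}

/-- Configurations of a system of CFSMs. -/
def Conf (M : ℕ → FSA Act) : Type := (X : ℕ) → Fin (M X).n

/-- A synchronisation step of the product automaton. -/
def PStep (P : Finset ℕ) (M : ℕ → FSA Act) (s : Conf M) (a : Interaction) (s' : Conf M) : Prop :=
  a.snd ∈ P ∧ a.rcv ∈ P ∧
  (M a.snd).tr (s a.snd) (Act.out a.snd a.rcv a.msg) (s' a.snd) ∧
  (M a.rcv).tr (s a.rcv) (Act.inp a.snd a.rcv a.msg) (s' a.rcv) ∧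
  ∀ X, X ≠ a.snd → X ≠ a.rcv → s X = s' X

def initConf (M : ℕ → FSA Act) : Conf M := fun X => (M X).q0

inductive PRun (P : Finset ℕ) (M : ℕ → FSA Act) : Conf M → List Interaction → Conf M → Prop
  | nil (s : Conf M) : PRun P M s [] s
  | cons {s s' s'' : Conf M} {a : Interaction} {l : List Interaction} :
      PStep P M s a s' → PRun P M s' l s'' → PRun P M s (a :: l) s''

/-- The language of the synchronous product automaton of a system of CFSMs. -/
def prodLang (P : Finset ℕ) (M : ℕ → FSA Act) : Set (Word Interaction) :=
  {w | match w with
       | .fin l => ∃ s, PRun P M (initConf M) l s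
       | .inf f => ∃ cs : ℕ → Conf M, cs 0 = initConf M ∧
           ∀ i, PStep P M (cs i) (f i) (cs (i+1))}

/-!
Membership in `⟦L↾⟧` only asks each participant of `L` to see, locally, the projection of some
word of `L`. Extensivity is immediate, and it forces `L` and `⟦L↾⟧` to have the same
participants, so every local projection of a word of `⟦L↾⟧` is already a local projection of a
word of `L`: this gives idempotence. For monotonicity, a participant of `L'` that does not occur
in `L` sees the empty word, which is the projection of `ε ∈ L'` by prefix closure.
-/

lemma mem_gsem {L : Set (Word Interaction)} {w : Word Interaction} :
    w ∈ gsem L ↔ wptp w ⊆ lptp L ∧ ∀ X ∈ lptp L, proj X w ∈ projLang X L := Iff.rfl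

lemma projI_eq_none {X : ℕ} {a : Interaction} (h : X ∉ iptp a) : projI X a = none := by
  simp only [iptp, Set.mem_insert_iff, Set.mem_singleton_iff, not_or] at h
  simp [projI, h.1, h.2]

lemma proj_eq_nil {X : ℕ} {w : Word Interaction} (h : X ∉ wptp w) :
    proj X w = Word.fin [] := by
  have hnone : ∀ i a, w.get? i = some a → projI X a = none :=
    fun i a hi => projI_eq_none fun hX => h ⟨i, a, hi, hX⟩
  cases w with
  | fin l =>
    simp only [proj, projL, Word.fin.injEq, List.filterMap_eq_nil_iff]
    intro a ha
    obtain ⟨i, hi⟩ := List.mem_iff_getElem?.mp ha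
    exact hnone i a hi
  | inf f =>
    have hfin : {i | (projI X (f i)).isSome = true}.Finite := by
      simp [hnone _ _ (rfl : (Word.inf f).get? _ = some (f _))]
    simp only [proj, hfin.not_infinite, if_false, projL, Word.fin.injEq,
      List.filterMap_eq_nil_iff, List.mem_map]
    rintro _ ⟨i, -, rfl⟩
    exact hnone i (f i) rfl

lemma Word.fin_nil_pref {σ : Type} (w : Word σ) : Word.Pref (Word.fin []) w := by
  cases w with
  | fin l => exact List.nil_prefix
  | inf f => intro i hi; simp at hi

lemma PrefixClosed.fin_nil_mem {σ : Type} {L : Set (Word σ)} (hL : PrefixClosed L)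
    (hne : L.Nonempty) : Word.fin [] ∈ L := by
  obtain ⟨w, hw⟩ := hne
  rw [hL]
  exact ⟨w, hw, w.fin_nil_pref⟩

lemma fin_nil_mem_projLang {L : Set (Word Interaction)} (hL : PrefixClosed L) {X : ℕ}
    (hX : X ∈ lptp L) : Word.fin [] ∈ projLang X L := by
  obtain ⟨w, hw, -⟩ := hX
  exact ⟨Word.fin [], hL.fin_nil_mem ⟨w, hw⟩, rfl⟩

lemma lptp_mono {L L' : Set (Word Interaction)} (h : L ⊆ L') : lptp L ⊆ lptp L' :=
  fun _ ⟨w, hw, hX⟩ => ⟨w, h hw, hX⟩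

lemma subset_gsem (L : Set (Word Interaction)) : L ⊆ gsem L :=
  fun w hw => ⟨fun _ hX => ⟨w, hw, hX⟩, fun _ _ => ⟨w, hw, rfl⟩⟩

lemma lptp_gsem (L : Set (Word Interaction)) : lptp (gsem L) = lptp L :=
  Set.Subset.antisymm (fun _ ⟨_, hw, hX⟩ => (mem_gsem.mp hw).1 hX)
    (lptp_mono (subset_gsem L))

lemma projLang_gsem {L : Set (Word Interaction)} {X : ℕ} (hX : X ∈ lptp L) :
    projLang X (gsem L) = projLang X L := by
  refine Set.Subset.antisymm ?_ (Set.image_mono (subset_gsem L))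
  rintro _ ⟨w, hw, rfl⟩
  exact (mem_gsem.mp hw).2 X hX

lemma gsem_mono {L L' : Set (Word Interaction)} (hL' : PrefixClosed L') (h : L ⊆ L') :
    gsem L ⊆ gsem L' := by
  intro w hw
  obtain ⟨hptp, hproj⟩ := mem_gsem.mp hw
  refine mem_gsem.mpr ⟨hptp.trans (lptp_mono h), fun X hX => ?_⟩
  by_cases hXL : X ∈ lptp L
  · exact Set.image_mono h (hproj X hXL)
  · rw [proj_eq_nil fun hXw => hXL (hptp hXw)]
    exact fin_nil_mem_projLang hL' hX

lemma gsem_gsem (L : Set (Word Interaction)) : gsem (gsem L) = gsem L := by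
  ext w
  simp only [mem_gsem, lptp_gsem]
  refine and_congr_right fun _ => forall₂_congr fun X hX => ?_
  rw [projLang_gsem hX]

theorem stmt5_general (L Lp : Set (Word Interaction)) (hLp : IsGLang Lp) :
    (L ⊆ Lp → gsem L ⊆ gsem Lp) ∧ L ⊆ gsem L ∧ gsem L = gsem (gsem L) :=
  ⟨gsem_mono hLp.1, subset_gsem L, (gsem_gsem L).symm⟩

/-- `L ↦ ⟦L↾⟧` is a closure operator: monotone, extensive and idempotent. -/
theorem stmt5 (L Lp : Set (Word Interaction)) (hL : IsGLang L) (hLp : IsGLang Lp) :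
    (L ⊆ Lp → gsem L ⊆ gsem Lp) ∧ L ⊆ gsem L ∧ gsem L = gsem (gsem L) :=
  stmt5_general L Lp hLp
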